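/- arXiv:2506.18014 — 3 statements merged into one kernel-verified Lean document; each statement's English description precedes it below -/
import Mathlib

section
/- Let a_0 ≤ a_1 ≤ ... ≤ a_5 and d be positive integers with a_0 + ... + a_5 = 2d, d = 2*a_5 + a_j for some index j ≤ 4 with a_j ≤ a_5, and a_2 + a_3 + a_4 < 3*a_5. Then 2*a_j < a_0 + a_1; in particular a_j = a_0 and a_0 < a_1. -/
/-- Under the FK3 condition with d = 2a₅ + aⱼ (j ≤ 4, aⱼ ≤ a₅) and
a₂ + a₃ + a₄ < 3a₅, we get 2aⱼ < a₀ + a₁, hence aⱼ = a₀ and a₀ < a₁. -/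
theorem stmt_2 (a : Fin 6 → ℕ) (d : ℕ) (j : Fin 6)
    (hapos : ∀ i, 0 < a i) (hd : 0 < d) (hmono : Monotone a)
    (hsum : ∑ i, a i = 2 * d)
    (hj : (j : ℕ) ≤ 4) (hja : a j ≤ a 5) (hdj : d = 2 * a 5 + a j)
    (h234 : a 2 + a 3 + a 4 < 3 * a 5) :
    2 * a j < a 0 + a 1 ∧ a j = a 0 ∧ a 0 < a 1 := by
  rw [Fin.sum_univ_six] at hsum
  have h0j : a 0 ≤ a j := hmono (Fin.zero_le j)
  have hkey : 2 * a j < a 0 + a 1 := by omega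
  have hj0 : a j = a 0 := by
    rcases Fin.eq_zero_or_eq_succ j with h | ⟨k, rfl⟩
    · rw [h]
    · have : a 1 ≤ a k.succ := by
        apply hmono
        simp [Fin.le_def]
      omega
  exact ⟨hkey, hj0, by omega⟩
end

section
/- Let n ≥ 1 and let a_0, ..., a_n, d be positive integers satisfying the quasi-smoothness criterion: for every nonempty subset I of {0,...,n}, either d is a nonnegative integer linear combination of {a_i : i ∈ I}, or there exist at least |I| indices j ∉ I such that d − a_j is a nonnegative integer linear combination of {a_i : i ∈ I}. Suppose moreover a_4 + a_5 = d (where n = 5). Then the weights a_0, a_1, a_2, a_3 together with d satisfy the same quasi-smoothness criterion: for every nonempty subset I of {0,1,2,3}, either d is a nonnegative integer linear combination of {a_i : i ∈ I}, or there exist at least |I| indices j ∈ {0,1,2,3} \ I such that d − a_j is a nonnegative integer linear combination of {a_i : i ∈ I}. -/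
private lemma mem0123 (j : Fin 6) (h4 : j ≠ 4) (h5 : j ≠ 5) :
    j ∈ ({0, 1, 2, 3} : Finset (Fin 6)) := by
  fin_cases j <;> simp_all

private lemma combo_subst (a : Fin 6 → ℕ) (I : Finset (Fin 6)) (q : Fin 6) (hq : q ∉ I)
    (c : Fin 6 → ℕ) (hc : a q = ∑ i ∈ I, c i * a i) (e : Fin 6 → ℕ) :
    ∃ c' : Fin 6 → ℕ, ∑ i ∈ insert q I, e i * a i = ∑ i ∈ I, c' i * a i := by
  refine ⟨fun i => e i + e q * c i, ?_⟩
  rw [Finset.sum_insert hq]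
  have h1 : ∑ i ∈ I, (e i + e q * c i) * a i
      = (∑ i ∈ I, e i * a i) + e q * ∑ i ∈ I, c i * a i := by
    rw [Finset.mul_sum, ← Finset.sum_add_distrib]
    exact Finset.sum_congr rfl fun i _ => by ring
  rw [h1, ← hc]
  omega

private lemma helper (a : Fin 6 → ℕ) (d : ℕ)
    (hqs : ∀ I : Finset (Fin 6), I.Nonempty →
      (∃ c : Fin 6 → ℕ, d = ∑ i ∈ I, c i * a i) ∨
      (∃ J : Finset (Fin 6), I.card ≤ J.card ∧ Disjoint J I ∧
        ∀ j ∈ J, ∃ c : Fin 6 → ℕ, d = a j + ∑ i ∈ I, c i * a i))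
    (I : Finset (Fin 6)) (hI : I ⊆ {0, 1, 2, 3}) (hne : I.Nonempty)
    (p q : Fin 6) (hp : p = 4 ∨ p = 5) (hq : q = 4 ∨ q = 5) (hpq : p ≠ q)
    (c : Fin 6 → ℕ) (hcq : a q = ∑ i ∈ I, c i * a i) :
    (∃ c : Fin 6 → ℕ, d = ∑ i ∈ I, c i * a i) ∨
    (∃ J : Finset (Fin 6), J ⊆ {0, 1, 2, 3} ∧ I.card ≤ J.card ∧ Disjoint J I ∧
      ∀ j ∈ J, ∃ c : Fin 6 → ℕ, d = a j + ∑ i ∈ I, c i * a i) := by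
  have hqI : q ∉ I := by
    intro h
    have := hI h
    rcases hq with rfl | rfl <;> simp at this
  rcases hqs (insert q I) ⟨q, Finset.mem_insert_self q I⟩ with ⟨e, he⟩ | ⟨J₂, hJ₂card, hJ₂disj, hJ₂⟩
  · left
    obtain ⟨c', hc'⟩ := combo_subst a I q hqI c hcq e
    exact ⟨c', he.trans hc'⟩
  · right
    refine ⟨J₂ \ {p}, ?_, ?_, ?_, ?_⟩
    · intro j hj
      rw [Finset.mem_sdiff, Finset.mem_singleton] at hj
      have hjq : j ≠ q := fun h => Finset.disjoint_left.mp hJ₂disj hj.1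
        (by rw [h]; exact Finset.mem_insert_self q I)
      rcases hp with rfl | rfl <;> rcases hq with rfl | rfl <;>
        first | exact absurd rfl hpq | exact mem0123 j hj.2 hjq | exact mem0123 j hjq hj.2
    · have h1 : I.card + 1 ≤ J₂.card := by
        rw [← Finset.card_insert_of_notMem hqI]; exact hJ₂card
      have h2 : J₂.card - 1 ≤ (J₂ \ {p}).card := by
        have h3 : (J₂ \ {p} ∪ {p}).card = (J₂ \ {p}).card + 1 := by
          rw [Finset.card_union_of_disjoint Finset.sdiff_disjoint]
          simp
        have h4 : J₂ ⊆ J₂ \ {p} ∪ {p} := by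
          intro x hx
          by_cases hxp : x = p
          · simp [hxp]
          · simp [hx, hxp]
        have := Finset.card_le_card h4
        omega
      omega
    · exact Finset.disjoint_of_subset_left (Finset.sdiff_subset)
        (Finset.disjoint_of_subset_right (Finset.subset_insert q I) hJ₂disj)
    · intro j hj
      obtain ⟨e, he⟩ := hJ₂ j (Finset.mem_sdiff.mp hj).1
      obtain ⟨c', hc'⟩ := combo_subst a I q hqI c hcq e
      exact ⟨c', by rw [he, hc']⟩

/-- If the weights a₀,...,a₅ with degree d satisfy the quasi-smoothness
criterion and a₄ + a₅ = d, then the weights a₀,...,a₃ with degree d satisfy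
the quasi-smoothness criterion as well. -/
theorem stmt_9 (a : Fin 6 → ℕ) (d : ℕ)
    (hapos : ∀ i, 0 < a i) (hd : 0 < d)
    (hqs : ∀ I : Finset (Fin 6), I.Nonempty →
      (∃ c : Fin 6 → ℕ, d = ∑ i ∈ I, c i * a i) ∨
      (∃ J : Finset (Fin 6), I.card ≤ J.card ∧ Disjoint J I ∧
        ∀ j ∈ J, ∃ c : Fin 6 → ℕ, d = a j + ∑ i ∈ I, c i * a i))
    (h45 : a 4 + a 5 = d) :
    ∀ I : Finset (Fin 6), I ⊆ {0, 1, 2, 3} → I.Nonempty →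
      (∃ c : Fin 6 → ℕ, d = ∑ i ∈ I, c i * a i) ∨
      (∃ J : Finset (Fin 6), J ⊆ {0, 1, 2, 3} ∧ I.card ≤ J.card ∧ Disjoint J I ∧
        ∀ j ∈ J, ∃ c : Fin 6 → ℕ, d = a j + ∑ i ∈ I, c i * a i) := by
  intro I hI hne
  rcases hqs I hne with ⟨c, hc⟩ | ⟨J, hJcard, hJdisj, hJ⟩
  · exact Or.inl ⟨c, hc⟩
  by_cases h4 : (4 : Fin 6) ∈ J
  · by_cases h5 : (5 : Fin 6) ∈ J
    · -- both 4 and 5 in J: d is a combination over I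
      obtain ⟨c4, hc4⟩ := hJ 4 h4
      obtain ⟨c5, hc5⟩ := hJ 5 h5
      left
      refine ⟨fun i => c4 i + c5 i, ?_⟩
      have hs : ∑ i ∈ I, (c4 i + c5 i) * a i
          = (∑ i ∈ I, c4 i * a i) + ∑ i ∈ I, c5 i * a i := by
        rw [← Finset.sum_add_distrib]
        exact Finset.sum_congr rfl fun i _ => by ring
      show d = ∑ i ∈ I, (c4 i + c5 i) * a i
      omega
    · -- 4 ∈ J, 5 ∉ J: a 5 is a combination over I
      obtain ⟨c4, hc4⟩ := hJ 4 h4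
      have hc5 : a 5 = ∑ i ∈ I, c4 i * a i := by omega
      exact helper a d hqs I hI hne 4 5 (Or.inl rfl) (Or.inr rfl) (by decide) c4 hc5
  · by_cases h5 : (5 : Fin 6) ∈ J
    · obtain ⟨c5, hc5⟩ := hJ 5 h5
      have hc4 : a 4 = ∑ i ∈ I, c5 i * a i := by omega
      exact helper a d hqs I hI hne 5 4 (Or.inr rfl) (Or.inl rfl) (by decide) c5 hc4
    · -- neither: J ⊆ {0,1,2,3}
      right
      refine ⟨J, ?_, hJcard, hJdisj, hJ⟩
      intro j hj
      exact mem0123 j (fun h => h4 (h ▸ hj)) (fun h => h5 (h ▸ hj))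
end

section
/- Let a_0 ≤ a_1 ≤ ... ≤ a_5 and d be positive integers satisfying: a_5 < d; a_0 + ... + a_5 = 2d; the quasi-smoothness criterion (for every nonempty subset I of {0,...,5}, either d is a nonnegative integer linear combination of {a_i : i ∈ I}, or there exist at least |I| indices j ∉ I such that d − a_j is a nonnegative integer linear combination of {a_i : i ∈ I}); gcd of every four of the weights equals 1; gcd of every three of the weights divides d; and a_5 > 1. Then d ≤ 2*a_5. -/
lemma tri' (w x y z c3 c4 c5 D : ℕ) (hxy : x ≤ y) (hyz : y ≤ z)
    (h : D = w + (c3 * x + c4 * y + c5 * z)) :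
    D ≤ w + z ∨
      (∃ u v, (u = x ∨ u = y ∨ u = z) ∧ (v = x ∨ v = y ∨ v = z) ∧ D = w + u + v) ∨
      w + 3 * x ≤ D := by
  rcases lt_trichotomy (c3 + c4 + c5) 2 with hm | hm | hm
  · left
    calc D = w + (c3 * x + c4 * y + c5 * z) := h
      _ ≤ w + (c3 * z + c4 * z + c5 * z) := by
          have h1 : c3 * x ≤ c3 * z := Nat.mul_le_mul_left c3 (hxy.trans hyz)
          have h2 : c4 * y ≤ c4 * z := Nat.mul_le_mul_left c4 hyz
          exact Nat.add_le_add_left (Nat.add_le_add (Nat.add_le_add h1 h2) le_rfl) w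
      _ = w + (c3 + c4 + c5) * z := by ring
      _ ≤ w + 1 * z := Nat.add_le_add_left (Nat.mul_le_mul_right z (by omega)) w
      _ = w + z := by ring
  · right; left
    have hcase : (c3 = 2 ∧ c4 = 0 ∧ c5 = 0) ∨ (c3 = 1 ∧ c4 = 1 ∧ c5 = 0) ∨
        (c3 = 1 ∧ c4 = 0 ∧ c5 = 1) ∨ (c3 = 0 ∧ c4 = 2 ∧ c5 = 0) ∨
        (c3 = 0 ∧ c4 = 1 ∧ c5 = 1) ∨ (c3 = 0 ∧ c4 = 0 ∧ c5 = 2) := by omega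
    rcases hcase with ⟨rfl, rfl, rfl⟩ | ⟨rfl, rfl, rfl⟩ | ⟨rfl, rfl, rfl⟩ |
      ⟨rfl, rfl, rfl⟩ | ⟨rfl, rfl, rfl⟩ | ⟨rfl, rfl, rfl⟩
    · exact ⟨x, x, Or.inl rfl, Or.inl rfl, by omega⟩
    · exact ⟨x, y, Or.inl rfl, Or.inr (Or.inl rfl), by omega⟩
    · exact ⟨x, z, Or.inl rfl, Or.inr (Or.inr rfl), by omega⟩
    · exact ⟨y, y, Or.inr (Or.inl rfl), Or.inr (Or.inl rfl), by omega⟩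
    · exact ⟨y, z, Or.inr (Or.inl rfl), Or.inr (Or.inr rfl), by omega⟩
    · exact ⟨z, z, Or.inr (Or.inr rfl), Or.inr (Or.inr rfl), by omega⟩
  · right; right
    calc w + 3 * x ≤ w + (c3 + c4 + c5) * x :=
          Nat.add_le_add_left (Nat.mul_le_mul_right x (by omega)) w
      _ = w + (c3 * x + c4 * x + c5 * x) := by ring
      _ ≤ w + (c3 * x + c4 * y + c5 * z) := by
          have h2 : c4 * x ≤ c4 * y := Nat.mul_le_mul_left c4 hxy
          have h3 : c5 * x ≤ c5 * z := Nat.mul_le_mul_left c5 (hxy.trans hyz)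
          exact Nat.add_le_add_left (Nat.add_le_add (Nat.add_le_add le_rfl h2) h3) w
      _ = D := h.symm

/-- The numerical quasi-smoothness criterion for a weighted hypersurface of
degree `d` in `P(a 0, ..., a 5)`: for every nonempty subset `I` of indices,
either `d` is a nonnegative integer combination of the weights in `I`, or
there are at least `|I|` indices `j ∉ I` with `d - a j` such a combination. -/
def QuasiSmoothCrit (a : Fin 6 → ℕ) (d : ℕ) : Prop :=
  ∀ I : Finset (Fin 6), I.Nonempty →
    (∃ c : Fin 6 → ℕ, d = ∑ i ∈ I, c i * a i) ∨
    (∃ J : Finset (Fin 6), I.card ≤ J.card ∧ Disjoint J I ∧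
      ∀ j ∈ J, ∃ c : Fin 6 → ℕ, d = a j + ∑ i ∈ I, c i * a i)

/-- Under the numerical conditions for an FK3 weighted fourfold with singular
locus of dimension at most one and a₅ > 1, one has d ≤ 2a₅. -/
theorem stmt_14 (a : Fin 6 → ℕ) (d : ℕ)
    (hapos : ∀ i, 0 < a i) (hd : 0 < d) (hmono : Monotone a)
    (h5lt : a 5 < d) (hsum : ∑ i, a i = 2 * d)
    (hqs : QuasiSmoothCrit a d)
    (hgcd4 : ∀ i j k l : Fin 6, i < j → j < k → k < l →
      Nat.gcd (a i) (Nat.gcd (a j) (Nat.gcd (a k) (a l))) = 1)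
    (hgcd3 : ∀ i j k : Fin 6, i < j → j < k →
      Nat.gcd (a i) (Nat.gcd (a j) (a k)) ∣ d)
    (h5 : 1 < a 5) :
    d ≤ 2 * a 5 := by
  by_contra hcon
  push_neg at hcon
  have hj6 : ∀ i : Fin 6, i = 0 ∨ i = 1 ∨ i = 2 ∨ i = 3 ∨ i = 4 ∨ i = 5 := by decide
  have m01 : a 0 ≤ a 1 := hmono (by decide)
  have m12 : a 1 ≤ a 2 := hmono (by decide)
  have m23 : a 2 ≤ a 3 := hmono (by decide)
  have m34 : a 3 ≤ a 4 := hmono (by decide)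
  have m45 : a 4 ≤ a 5 := hmono (by decide)
  have p0 := hapos 0
  have p3 := hapos 3
  have hsum6 : a 0 + a 1 + a 2 + a 3 + a 4 + a 5 = 2 * d := by
    rw [← hsum]; exact (Fin.sum_univ_six a).symm
  have gcd_contra : a 2 = a 5 → a 3 = a 5 → a 4 = a 5 → False := by
    intro h2 h3 h4
    have hg := hgcd4 2 3 4 5 (by decide) (by decide) (by decide)
    rw [h2, h3, h4, Nat.gcd_self, Nat.gcd_self, Nat.gcd_self] at hg
    omega
  have hsum45 : ∀ c : Fin 6 → ℕ,
      ∑ i ∈ ({4, 5} : Finset (Fin 6)), c i * a i = c 4 * a 4 + c 5 * a 5 := by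
    intro c; rw [Finset.sum_insert (by decide), Finset.sum_singleton]
  have hsum345 : ∀ c : Fin 6 → ℕ,
      ∑ i ∈ ({3, 4, 5} : Finset (Fin 6)), c i * a i
        = c 3 * a 3 + c 4 * a 4 + c 5 * a 5 := by
    intro c
    rw [Finset.sum_insert (by decide), Finset.sum_insert (by decide),
      Finset.sum_singleton]
    ring
  by_cases hge : 3 * a 5 ≤ d
  · exact gcd_contra (by omega) (by omega) (by omega)
  have hd3 : d < 3 * a 5 := by omega
  -- Step 1: a 0 = d - 2 * a 5
  have hA0 : d = a 0 + 2 * a 5 := by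
    rcases hqs {5} (Finset.singleton_nonempty 5) with ⟨c, hc⟩ | ⟨J, hJc, hJd, hJP⟩
    · rw [Finset.sum_singleton] at hc
      have htri := tri' 0 (a 5) (a 5) (a 5) 0 0 (c 5) d le_rfl le_rfl (by rw [hc]; ring)
      clear hc
      rcases htri with h | ⟨u, v, rfl | rfl | rfl, rfl | rfl | rfl, huv⟩ | h <;> omega
    · obtain ⟨j, hj⟩ := Finset.card_pos.mp (lt_of_lt_of_le (by decide) hJc)
      have hj5 := Finset.disjoint_left.mp hJd hj
      obtain ⟨c, hc⟩ := hJP j hj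
      rw [Finset.sum_singleton] at hc
      have htri := tri' (a j) (a 5) (a 5) (a 5) 0 0 (c 5) d le_rfl le_rfl
        (by rw [hc]; ring)
      clear hc
      rcases hj6 j with rfl | rfl | rfl | rfl | rfl | rfl
      · rcases htri with h | ⟨u, v, rfl | rfl | rfl, rfl | rfl | rfl, huv⟩ | h <;> omega
      · exfalso
        rcases htri with h | ⟨u, v, rfl | rfl | rfl, rfl | rfl | rfl, huv⟩ | h <;>
          first
            | omega
            | exact gcd_contra (by omega) (by omega) (by omega)
      · exfalso
        rcases htri with h | ⟨u, v, rfl | rfl | rfl, rfl | rfl | rfl, huv⟩ | h <;> omega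
      · exfalso
        rcases htri with h | ⟨u, v, rfl | rfl | rfl, rfl | rfl | rfl, huv⟩ | h <;> omega
      · exfalso
        rcases htri with h | ⟨u, v, rfl | rfl | rfl, rfl | rfl | rfl, huv⟩ | h <;> omega
      · exact absurd (by decide) hj5
  -- Step 2: the final configuration is impossible
  have final : a 1 = a 3 → a 2 = a 3 → a 4 = a 5 → d = 3 * a 3 → False := by
    intro h13 h23 h45x hd3a
    by_cases h35 : a 3 = a 5
    · exact gcd_contra (by omega) (by omega) (by omega)
    rcases hqs {4, 5} ⟨4, by decide⟩ with ⟨c, hc⟩ | ⟨J, hJc, hJd, hJP⟩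
    · rw [hsum45] at hc
      have htri := tri' 0 (a 5) (a 5) (a 5) 0 (c 4) (c 5) d le_rfl le_rfl
        (by rw [hc, h45x]; ring)
      clear hc
      rcases htri with h | ⟨u, v, rfl | rfl | rfl, rfl | rfl | rfl, huv⟩ | h <;> omega
    · have key : ∀ j, j ∈ J → j = (0 : Fin 6) := by
        intro j hj
        have hjn := Finset.disjoint_left.mp hJd hj
        obtain ⟨c, hc⟩ := hJP j hj
        rw [hsum45] at hc
        have htri := tri' (a j) (a 5) (a 5) (a 5) 0 (c 4) (c 5) d le_rfl le_rfl
          (by rw [hc, h45x]; ring)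
        clear hc
        rcases hj6 j with rfl | rfl | rfl | rfl | rfl | rfl
        · rfl
        · exfalso
          rcases htri with h | ⟨u, v, rfl | rfl | rfl, rfl | rfl | rfl, huv⟩ | h <;> omega
        · exfalso
          rcases htri with h | ⟨u, v, rfl | rfl | rfl, rfl | rfl | rfl, huv⟩ | h <;> omega
        · exfalso
          rcases htri with h | ⟨u, v, rfl | rfl | rfl, rfl | rfl | rfl, huv⟩ | h <;> omega
        · exact absurd (by decide) hjn
        · exact absurd (by decide) hjn
      obtain ⟨j1, hj1, j2, hj2, hne⟩ := Finset.one_lt_card.mp (lt_of_lt_of_le (by decide) hJc)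
      exact hne ((key j1 hj1).trans (key j2 hj2).symm)
  -- Step 3: analyze I = {3,4,5}
  rcases hqs {3, 4, 5} ⟨3, by decide⟩ with ⟨c, hc⟩ | ⟨J, hJc, hJd, hJP⟩
  · rw [hsum345] at hc
    have htri := tri' 0 (a 3) (a 4) (a 5) (c 3) (c 4) (c 5) d m34 m45 (by rw [hc]; ring)
    clear hc
    rcases htri with h | ⟨u, v, rfl | rfl | rfl, rfl | rfl | rfl, huv⟩ | h <;>
      first
        | omega
        | exact final (by omega) (by omega) (by omega) (by omega)
  · have hsub : J ⊆ ({0, 1, 2} : Finset (Fin 6)) := by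
      intro j hj
      have hjn := Finset.disjoint_left.mp hJd hj
      rcases hj6 j with rfl | rfl | rfl | rfl | rfl | rfl
      · decide
      · decide
      · decide
      · exact absurd (by decide) hjn
      · exact absurd (by decide) hjn
      · exact absurd (by decide) hjn
    have hJeq : J = {0, 1, 2} :=
      Finset.eq_of_subset_of_card_le hsub (le_trans (by decide) hJc)
    have h1m : (1 : Fin 6) ∈ J := by rw [hJeq]; decide
    have h2m : (2 : Fin 6) ∈ J := by rw [hJeq]; decide
    obtain ⟨c, hc1⟩ := hJP 1 h1m
    rw [hsum345] at hc1
    have htri1 := tri' (a 1) (a 3) (a 4) (a 5) (c 3) (c 4) (c 5) d m34 m45 hc1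
    clear hc1
    have h2345 : a 2 = a 3 ∧ a 4 = a 5 := by
      rcases htri1 with h | ⟨u, v, rfl | rfl | rfl, rfl | rfl | rfl, huv⟩ | h <;> omega
    obtain ⟨c', hc2⟩ := hJP 2 h2m
    rw [hsum345] at hc2
    have htri2 := tri' (a 2) (a 3) (a 4) (a 5) (c' 3) (c' 4) (c' 5) d m34 m45 hc2
    clear hc2
    rcases htri2 with h | ⟨u, v, rfl | rfl | rfl, rfl | rfl | rfl, huv⟩ | h <;>
      first
        | omega
        | exact final (by omega) (by omega) (by omega) (by omega)
        | exact gcd_contra (by omega) (by omega) (by omega)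
end
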